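/- arXiv:2410.18735 — 2 statements merged into one kernel-verified Lean document; each statement's English description precedes it below -/
import Mathlib

section
/- Let (D, F) be a consistent classical-deterministic causal model, let s be a source vertex of D (i.e. Pa_D(s) = ∅), and fix any output value o_s ∈ O_s. Then the reduced causal model (D', F'), where D' is D with the vertex s and all edges incident to s removed, and where F' consists of ω_v for every v not a child of s and of the partial application ω_v(o_s, ·) for every child v of s, is again consistent. -/
set_option autoImplicit false

/-- A function `f` on a dependent product depends only on the coordinates in `S`:
its value is unchanged when the argument is modified outside of `S`. -/
def DependsOnlyOn {V : Type} {O : V → Type} {α : Type} (f : (∀ v, O v) → α) (S : Set V) : Prop :=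
  ∀ o o' : ∀ v, O v, (∀ v ∈ S, o v = o' v) → f o = f o'

/-- A function `f` on a dependent product depends nontrivially on the coordinate `ℓ`:
there are two arguments that differ only at `ℓ` and get assigned different values. -/
def DependsNontriviallyOn {V : Type} {O : V → Type} {α : Type} (f : (∀ v, O v) → α) (ℓ : V) : Prop :=
  ∃ o o' : ∀ v, O v, (∀ k, k ≠ ℓ → o k = o' k) ∧ f o ≠ f o'

/-- `c` is a directed cycle (of length `n`, with pairwise distinct vertices) in the
digraph with edge relation `E`. -/
def IsDirCycle {V : Type} (E : V → V → Prop) {n : ℕ} (c : ZMod n → V) : Prop :=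
  0 < n ∧ Function.Injective c ∧ ∀ i, E (c i) (c (i + 1))

/-- The directed cycle `c` has a chord: an edge `c i → c j` with `j ≠ i + 1 (mod n)`. -/
def HasChord {V : Type} (E : V → V → Prop) {n : ℕ} (c : ZMod n → V) : Prop :=
  ∃ i j : ZMod n, E (c i) (c j) ∧ j ≠ i + 1

/-- A digraph is a siblings-on-cycles graph if every directed cycle contains two
(distinct) vertices that share a common parent. -/
def SiblingsOnCycles {V : Type} (E : V → V → Prop) : Prop :=
  ∀ (n : ℕ) (c : ZMod n → V), IsDirCycle E c →
    ∃ i j : ZMod n, i ≠ j ∧ ∃ p, E p (c i) ∧ E p (c j)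

open Classical in
/-- The deterministic correlation `p(a|x) = [g(x) = a]` induced by a function `g`. -/
noncomputable def detCorr {V : Type} {X A : V → Type} (g : (∀ v, X v) → ∀ v, A v) :
    (∀ v, X v) → (∀ v, A v) → ℝ :=
  fun x a => if a = g x then 1 else 0

/-- A classical-deterministic causal model: a finite vertex set `V`, a digraph `E`
(the causal structure), finite nonempty output- and input-sets `O v`, `I v`, and the
model parameters `ω v : (∀ ℓ, O ℓ) → I v`.  (That `ω v` only depends on the
coordinates of the parents of `v` is expressed by `StructComp` below.) -/
structure CDModel where
  V : Type
  [fintV : Fintype V]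
  [decV : DecidableEq V]
  E : V → V → Prop
  O : V → Type
  I : V → Type
  [fintO : ∀ v, Fintype (O v)]
  [neO : ∀ v, Nonempty (O v)]
  [fintI : ∀ v, Fintype (I v)]
  [neI : ∀ v, Nonempty (I v)]
  ω : ∀ v, (∀ ℓ, O ℓ) → I v

attribute [instance] CDModel.fintV CDModel.decV CDModel.fintO CDModel.neO CDModel.fintI CDModel.neI

namespace CDModel

variable (M : CDModel)

/-- The parents of `v`. -/
def Pa (v : M.V) : Set M.V := {k | M.E k v}

/-- The children of `s`. -/
def Ch (s : M.V) : Set M.V := {v | M.E s v}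

/-- A source vertex: a vertex without parents. -/
def IsSource (s : M.V) : Prop := ∀ k, ¬ M.E k s

/-- The digraph `E` is a causal structure for the model parameters, i.e. each `ω v`
is a function of the outputs of the parents of `v` only. -/
def StructComp : Prop := ∀ v, DependsOnlyOn (M.ω v) (M.Pa v)

/-- Faithfulness: each `ω v` depends nontrivially on each of the parents of `v`. -/
def Faithful : Prop := ∀ ℓ v, M.E ℓ v → DependsNontriviallyOn (M.ω v) ℓ

open Classical in
/-- `g` witnesses the consistency condition for the interventions `μ`: for all
settings `x` and results `a`, the number of pairs `(i, o)` with `ω v o = i v` and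
`μ v (x v, i v) = (a v, o v)` (for all `v`) is `1` if `a = g x` and `0` otherwise. -/
def IsWitness (X A : M.V → Type) (μ : ∀ v, X v × M.I v → A v × M.O v)
    (g : (∀ v, X v) → ∀ v, A v) : Prop :=
  ∀ (x : ∀ v, X v) (a : ∀ v, A v),
    Nat.card {io : (∀ v, M.I v) × (∀ v, M.O v) //
      (∀ v, M.ω v io.2 = io.1 v) ∧ ∀ v, μ v (x v, io.1 v) = (a v, io.2 v)} =
    if a = g x then 1 else 0

/-- Consistency: every family of interventions admits a witnessing function `g`. -/
def Consistent : Prop :=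
  ∀ (X A : M.V → Type)
    (_ : ∀ v, Fintype (X v)) (_ : ∀ v, Nonempty (X v))
    (_ : ∀ v, Fintype (A v)) (_ : ∀ v, Nonempty (A v))
    (μ : ∀ v, X v × M.I v → A v × M.O v),
    ∃ g : (∀ v, X v) → ∀ v, A v, M.IsWitness X A μ g

/-- Extend an assignment of outputs on `V ∖ {s}` to all of `V` by putting `os` at `s`. -/
def extendAt (s : M.V) (os : M.O s) (o : ∀ v : {v : M.V // v ≠ s}, M.O v.1) (ℓ : M.V) :
    M.O ℓ :=
  if h : ℓ = s then cast (congrArg M.O h.symm) os else o ⟨ℓ, h⟩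

/-- The reduced causal model obtained by fixing the output `os` of the source `s`:
the vertex `s` and all its incident edges are removed, and each model parameter is
partially applied at the coordinate `s` (which keeps `ω v` unchanged for non-children
of `s`). -/
def reduce (s : M.V) (os : M.O s) : CDModel where
  V := {v : M.V // v ≠ s}
  E := fun a b => M.E a.1 b.1
  O := fun v => M.O v.1
  I := fun v => M.I v.1
  ω := fun v o => M.ω v.1 (M.extendAt s os o)

/-- The dependency graph of the model parameters: edge `ℓ → v` iff `ω v` depends
nontrivially on its `O ℓ`-coordinate. -/
def depGraph : M.V → M.V → Prop := fun ℓ v => DependsNontriviallyOn (M.ω v) ℓ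

/-- Replace the causal structure by the dependency graph of the model parameters. -/
def restrictDep : CDModel where
  V := M.V
  E := M.depGraph
  O := M.O
  I := M.I
  ω := M.ω

/-- One step of the flow: fix an output value of a source, pass to the reduced model,
and restrict its causal structure to the dependency graph of the reduced parameters. -/
def flowStep (s : M.V) (os : M.O s) : CDModel := (M.reduce s os).restrictDep

end CDModel

/-- Reachability of one causal model from another by a finite sequence of flow steps,
each fixing an output value of a source vertex of the current causal structure. -/
inductive Reaches : CDModel → CDModel → Prop where
  | refl (M : CDModel) : Reaches M M
  | tail {M N : CDModel} (s : M.V) (hs : M.IsSource s) (os : M.O s)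
      (h : Reaches (M.flowStep s os) N) : Reaches M N

/-- Causal correlations, defined recursively: a family of correlations on at most one
agent is causal; and a correlation is causal if it decomposes as a convex combination
over a first agent `v` of a local conditional distribution for `v` times correlations
for the remaining agents (depending on `v`'s setting and result) that are again causal. -/
inductive IsCausal : ∀ (S : Type) (X A : S → Type), ((∀ v, X v) → (∀ v, A v) → ℝ) → Prop where
  | base {S : Type} [Fintype S] {X A : S → Type}
      (p : (∀ v, X v) → (∀ v, A v) → ℝ) (h : Fintype.card S ≤ 1) : IsCausal S X A p
  | step {S : Type} [Fintype S] [DecidableEq S] {X A : S → Type} [∀ v, Fintype (A v)]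
      (p : (∀ v, X v) → (∀ v, A v) → ℝ)
      (q : S → ℝ) (hq0 : ∀ v, 0 ≤ q v) (hq1 : ∑ v, q v = 1)
      (pv : ∀ v : S, X v → A v → ℝ)
      (hpv0 : ∀ v x a, 0 ≤ pv v x a) (hpv1 : ∀ v x, ∑ a, pv v x a = 1)
      (pr : ∀ v : S, X v → A v →
        (∀ u : {u : S // u ≠ v}, X u.1) → (∀ u : {u : S // u ≠ v}, A u.1) → ℝ)
      (hpr : ∀ v xv av, IsCausal {u : S // u ≠ v} (fun u => X u.1) (fun u => A u.1) (pr v xv av))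
      (hdec : ∀ x a, p x a =
        ∑ v, q v * pv v (x v) (a v) * pr v (x v) (a v) (fun u => x u.1) (fun u => a u.1)) :
      IsCausal S X A p

/-- Convenience constructor for classical-deterministic causal models. -/
abbrev mkModel (V : Type) [Fintype V] [DecidableEq V] (E : V → V → Prop) (O I : V → Type)
    [∀ v, Fintype (O v)] [∀ v, Nonempty (O v)] [∀ v, Fintype (I v)] [∀ v, Nonempty (I v)]
    (ω : ∀ v, (∀ ℓ, O ℓ) → I v) : CDModel :=
  { V := V, E := E, O := O, I := I, ω := ω }

/-!
Freeze the output of `s` by an extra intervention at `s` with trivial settings and results that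
ignores its input and always emits `os`. Together with the given interventions on the remaining
vertices this is a family of interventions on the full model, whose solutions correspond
bijectively to those of the reduced model: the output at `s` is forced to be `os`, and all
inputs are determined by the outputs. The witness for the full model therefore restricts to
a witness for the reduced one.
-/

namespace CDModel

variable (M : CDModel)

def solutionsEquivOutputs {X A : M.V → Type} (μ : ∀ v, X v × M.I v → A v × M.O v)
    (x : ∀ v, X v) (a : ∀ v, A v) :
    {io : (∀ v, M.I v) × (∀ v, M.O v) //
      (∀ v, M.ω v io.2 = io.1 v) ∧ ∀ v, μ v (x v, io.1 v) = (a v, io.2 v)} ≃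
    {o : ∀ v, M.O v // ∀ v, μ v (x v, M.ω v o) = (a v, o v)} where
  toFun io := ⟨io.1.2, fun v => by rw [io.2.1 v]; exact io.2.2 v⟩
  invFun o := ⟨(fun v => M.ω v o, o), fun _ => rfl, o.2⟩
  left_inv io := Subtype.ext (Prod.ext (funext io.2.1) rfl)
  right_inv _ := rfl

open Classical in
theorem isWitness_iff {X A : M.V → Type} (μ : ∀ v, X v × M.I v → A v × M.O v)
    (g : (∀ v, X v) → ∀ v, A v) :
    M.IsWitness X A μ g ↔ ∀ x a,
      Nat.card {o : ∀ v, M.O v // ∀ v, μ v (x v, M.ω v o) = (a v, o v)} =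
        if a = g x then 1 else 0 := by
  simp only [IsWitness, Nat.card_congr (M.solutionsEquivOutputs μ _ _)]

section Reduce

variable {s : M.V} (os : M.O s)

@[simp]
theorem extendAt_self (o : ∀ v : {v // v ≠ s}, M.O v.1) : M.extendAt s os o s = os := by
  simp [extendAt]

@[simp]
theorem extendAt_of_ne (o : ∀ v : {v // v ≠ s}, M.O v.1) {v : M.V} (h : v ≠ s) :
    M.extendAt s os o v = o ⟨v, h⟩ :=
  dif_neg h

theorem extendAt_restrict {o : ∀ v, M.O v} (h : o s = os) :
    M.extendAt s os (fun v => o v.1) = o := by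
  funext v
  by_cases hv : v = s
  · subst hv
    simp [h]
  · simp [hv]

variable {X' A' : {v // v ≠ s} → Type}

/-- Settings and results at `v` are families indexed by proofs of `v ≠ s`; at `s` they form a
singleton. -/
def liftIntervention
    (μ' : ∀ v, X' v × (M.reduce s os).I v → A' v × (M.reduce s os).O v) :
    ∀ v, (∀ h : v ≠ s, X' ⟨v, h⟩) × M.I v → (∀ h : v ≠ s, A' ⟨v, h⟩) × M.O v :=
  fun v xi =>
    if h : v = s then (fun h' => absurd h h', h ▸ os)
    else (fun _ => (μ' ⟨v, h⟩ (xi.1 h, xi.2)).1, (μ' ⟨v, h⟩ (xi.1 h, xi.2)).2)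

theorem liftIntervention_fixed_iff
    (μ' : ∀ v, X' v × (M.reduce s os).I v → A' v × (M.reduce s os).O v)
    (x' : ∀ v, X' v) (a' : ∀ v, A' v) (o : ∀ v, M.O v) :
    (∀ v, M.liftIntervention os μ' v (fun h => x' ⟨v, h⟩, M.ω v o) = (fun h => a' ⟨v, h⟩, o v)) ↔
      o s = os ∧ ∀ v : {v // v ≠ s}, μ' v (x' v, M.ω v.1 o) = (a' v, o v.1) := by
  constructor
  · intro h
    refine ⟨?_, fun ⟨v, hv⟩ => ?_⟩
    · have hs := congrArg Prod.snd (h s)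
      simp only [liftIntervention, dif_pos] at hs
      exact hs.symm
    · have hv' := h v
      rw [liftIntervention, dif_neg hv] at hv'
      have hfst := congrFun (congrArg Prod.fst hv') hv
      have hsnd := congrArg Prod.snd hv'
      exact Prod.ext hfst hsnd
  · rintro ⟨hs, h⟩ v
    by_cases hv : v = s
    · subst hv
      simp only [liftIntervention, dif_pos, hs, Prod.mk.injEq, and_true]
      exact funext fun h => absurd rfl h
    · simp only [liftIntervention, dif_neg hv, h ⟨v, hv⟩]

def reduceOutputsEquiv
    (μ' : ∀ v, X' v × (M.reduce s os).I v → A' v × (M.reduce s os).O v)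
    (x' : ∀ v, X' v) (a' : ∀ v, A' v) :
    {o' : ∀ v, (M.reduce s os).O v //
        ∀ v, μ' v (x' v, (M.reduce s os).ω v o') = (a' v, o' v)} ≃
      {o : ∀ v, M.O v // ∀ v,
        M.liftIntervention os μ' v (fun h => x' ⟨v, h⟩, M.ω v o) = (fun h => a' ⟨v, h⟩, o v)} where
  toFun o' := ⟨M.extendAt s os o'.1, (M.liftIntervention_fixed_iff os μ' x' a' _).2
    ⟨M.extendAt_self os o'.1, fun v => by rw [M.extendAt_of_ne os o'.1 v.2]; exact o'.2 v⟩⟩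
  invFun o := ⟨fun v => o.1 v.1, by
    obtain ⟨hs, h⟩ := (M.liftIntervention_fixed_iff os μ' x' a' o).1 o.2
    intro v
    change μ' v (x' v, M.ω v.1 (M.extendAt s os fun w => o.1 w.1)) = _
    rw [M.extendAt_restrict os hs]
    exact h v⟩
  left_inv o' := Subtype.ext (funext fun v => M.extendAt_of_ne os o'.1 v.2)
  right_inv o := Subtype.ext (M.extendAt_restrict os
    ((M.liftIntervention_fixed_iff os μ' x' a' o).1 o.2).1)

end Reduce

end CDModel

theorem stmt0_general (M : CDModel) (hcons : M.Consistent)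
    (s : M.V) (os : M.O s) :
    (M.reduce s os).Consistent := by
  classical
  intro X' A' hXfin hXne hAfin hAne μ'
  -- instance search does not unfold `(M.reduce s os).V` to `{v // v ≠ s}`
  have : ∀ v : {v // v ≠ s}, Fintype (X' v) := hXfin
  have : ∀ v : {v // v ≠ s}, Nonempty (X' v) := hXne
  have : ∀ v : {v // v ≠ s}, Fintype (A' v) := hAfin
  have : ∀ v : {v // v ≠ s}, Nonempty (A' v) := hAne
  obtain ⟨g, hg⟩ := hcons (fun v => ∀ h : v ≠ s, X' ⟨v, h⟩) (fun v => ∀ h : v ≠ s, A' ⟨v, h⟩)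
    inferInstance inferInstance inferInstance inferInstance (M.liftIntervention os μ')
  rw [M.isWitness_iff] at hg
  refine ⟨fun x' v => g (fun w h => x' ⟨w, h⟩) v.1 v.2,
    ((M.reduce s os).isWitness_iff _ _).2 fun x' a' => ?_⟩
  have hlift : (fun w h => a' ⟨w, h⟩) = g (fun w h => x' ⟨w, h⟩) ↔
      a' = fun v : {v // v ≠ s} => g (fun w h => x' ⟨w, h⟩) v.1 v.2 :=
    ⟨fun h => funext fun v => congrFun (congrFun h v.1) v.2,
      fun h => funext fun w => funext fun hw => congrFun h ⟨w, hw⟩⟩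
  refine (Nat.card_congr (M.reduceOutputsEquiv os μ' x' a')).trans ((hg _ _).trans ?_)
  congr 1
  exact propext hlift

/-- **Reduction.**
If `(D, F)` is a consistent classical-deterministic causal model, `s` a source vertex
of `D`, and `o_s ∈ O_s` any output value, then the reduced causal model `(D', F')` is
again consistent. -/
theorem stmt0 (M : CDModel) (hstruct : M.StructComp) (hcons : M.Consistent)
    (s : M.V) (hs : M.IsSource s) (os : M.O s) :
    (M.reduce s os).Consistent :=
  stmt0_general M hcons s os
end

section
/- Let (D, F) be a consistent classical-deterministic causal model with |V| ≥ 2, let s be a source vertex of D, and fix interventions (μ_v)_{v∈V} and a setting x. Let o_s be the O_s-component and a_s the A_s-component of μ_s(x_s, c), where c is the constant value of ω_s. Then the correlation of (D, F) factorizes over s: for all a, p(a | x) = [a_s is the s-component of a] · p'(a restricted to V∖{s} | x restricted to V∖{s}), where p(a|x) = [g(x) = a] is the correlation of (D, F) under (μ_v) and p' is the correlation of the reduced model (D', F') at output o_s under the interventions (μ_v)_{v ≠ s}. -/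
set_option autoImplicit false

/-
Since `s` is a source, `ω s` is constant, so in the unique solution `(i, o)` of the
consistency equations of `M` at `(x, g x)` the input of `s` is `c` and hence
`μ s (x s, c) = (g x s, o s)`. Restricting `(i, o)` to `V ∖ {s}` solves the equations of
the model reduced at `o s`, so the reduced witness `g'` must return the restriction of
`g x`. The factorization is then the splitting of `a = g x` into its `s`-coordinate and
its restriction to `V ∖ {s}`.
-/

namespace CDModel

variable {M : CDModel}

theorem StructComp.ω_eq_of_isSource (hstruct : M.StructComp) {s : M.V} (hs : M.IsSource s)
    (o o' : ∀ v, M.O v) : M.ω s o = M.ω s o' :=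
  hstruct s o o' fun v hv => absurd hv (hs v)

theorem extendAt_apply_restrict (s : M.V) (o : ∀ v, M.O v) :
    M.extendAt s (o s) (fun v => o v.1) = o := by
  funext ℓ
  by_cases h : ℓ = s
  · subst h; simp [extendAt]
  · simp [extendAt, h]

def IsSolution {X A : M.V → Type} (μ : ∀ v, X v × M.I v → A v × M.O v) (x : ∀ v, X v) (a : ∀ v, A v)
    (io : (∀ v, M.I v) × (∀ v, M.O v)) : Prop :=
  (∀ v, M.ω v io.2 = io.1 v) ∧ ∀ v, μ v (x v, io.1 v) = (a v, io.2 v)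

variable {X A : M.V → Type} {μ : ∀ v, X v × M.I v → A v × M.O v}

theorem IsWitness.exists_isSolution {g : (∀ v, X v) → ∀ v, A v}
    (hg : M.IsWitness X A μ g) (x : ∀ v, X v) : ∃ io, M.IsSolution μ x (g x) io := by
  have hcard : Nat.card {io // M.IsSolution μ x (g x) io} = 1 :=
    (hg x (g x)).trans (if_pos rfl)
  obtain ⟨⟨io, hio⟩⟩ := (Nat.card_eq_one_iff_unique.mp hcard).2
  exact ⟨io, hio⟩

theorem IsWitness.apply_eq_of_isSolution {g : (∀ v, X v) → ∀ v, A v}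
    (hg : M.IsWitness X A μ g) {x : ∀ v, X v} {a : ∀ v, A v}
    {io : (∀ v, M.I v) × (∀ v, M.O v)} (h : M.IsSolution μ x a io) : g x = a := by
  by_contra hne
  have hcard : Nat.card {io // M.IsSolution μ x a io} = 0 :=
    (hg x a).trans (if_neg (Ne.symm hne))
  exact Nat.card_ne_zero.mpr ⟨⟨⟨io, h⟩⟩, inferInstance⟩ hcard

theorem IsSolution.reduce {s : M.V} {x : ∀ v, X v} {a : ∀ v, A v}
    {io : (∀ v, M.I v) × (∀ v, M.O v)} (h : M.IsSolution μ x a io) :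
    (M.reduce s (io.2 s)).IsSolution (fun v => μ v.1) (fun v => x v.1) (fun v => a v.1)
      (fun v => io.1 v.1, fun v => io.2 v.1) := by
  refine ⟨fun v => ?_, fun v => h.2 v.1⟩
  change M.ω v.1 (M.extendAt s (io.2 s) fun u => io.2 u.1) = io.1 v.1
  rw [extendAt_apply_restrict]
  exact h.1 v.1

end CDModel

theorem eq_iff_apply_eq_and_restrict_eq {V : Type} {A : V → Type} (s : V) {a b : ∀ v, A v} :
    a = b ↔ a s = b s ∧ (fun v : {v // v ≠ s} => a v.1) = fun v : {v // v ≠ s} => b v.1 := by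
  refine ⟨fun h => h ▸ ⟨rfl, rfl⟩, fun ⟨hs, hrest⟩ => funext fun v => ?_⟩
  by_cases hv : v = s
  · exact hv ▸ hs
  · exact congrFun hrest ⟨v, hv⟩

open Classical in
theorem detCorr_eq_ite_mul_detCorr_restrict {V : Type} {X A : V → Type} (s : V)
    (g : (∀ v, X v) → ∀ v, A v)
    (g' : (∀ v : {v : V // v ≠ s}, X v.1) → ∀ v : {v : V // v ≠ s}, A v.1)
    (x : ∀ v, X v) (hg' : g' (fun v => x v.1) = fun v : {v : V // v ≠ s} => g x v.1)
    (a : ∀ v, A v) :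
    detCorr g x a =
      (if a s = g x s then (1 : ℝ) else 0) * detCorr g' (fun v => x v.1) (fun v => a v.1) := by
  simp only [detCorr, hg', eq_iff_apply_eq_and_restrict_eq s (a := a), ite_and]
  split_ifs <;> simp

open Classical in
theorem stmt6_general (M : CDModel) (hstruct : M.StructComp)
    (s : M.V) (hs : M.IsSource s)
    (X A : M.V → Type)
    (μ : ∀ v, X v × M.I v → A v × M.O v)
    (x : ∀ v, X v) (o₀ : ∀ v, M.O v)
    (g : (∀ v, X v) → ∀ v, A v) (hg : M.IsWitness X A μ g)
    (g' : (∀ v : {v : M.V // v ≠ s}, X v.1) → ∀ v : {v : M.V // v ≠ s}, A v.1)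
    (hg' : (M.reduce s (μ s (x s, M.ω s o₀)).2).IsWitness
      (fun v => X v.1) (fun v => A v.1) (fun v => μ v.1) g') :
    ∀ a : ∀ v, A v,
      detCorr g x a =
        (if a s = (μ s (x s, M.ω s o₀)).1 then (1 : ℝ) else 0) *
          detCorr g' (fun v => x v.1) (fun v => a v.1) := by
  intro a
  obtain ⟨io, hio⟩ := hg.exists_isSolution x
  have hsource : μ s (x s, M.ω s o₀) = (g x s, io.2 s) := by
    rw [hstruct.ω_eq_of_isSource hs o₀ io.2, hio.1 s]
    exact hio.2 s
  have hg'x : g' (fun v => x v.1) = fun v : {v : M.V // v ≠ s} => g x v.1 := by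
    apply hg'.apply_eq_of_isSolution (io := (fun v => io.1 v.1, fun v => io.2 v.1))
    rw [hsource]
    exact hio.reduce
  rw [hsource]
  exact detCorr_eq_ite_mul_detCorr_restrict s g g' x hg'x a

open Classical in
/-- **Factorization over a source.**
Let `(D, F)` be a consistent causal model with at least two agents, `s` a source, and
fix interventions `μ` and a setting `x`.  With `c` the constant value of `ω s`
(expressed as `M.ω s o₀` for an arbitrary `o₀`), let `o_s` and `a_s` be the `O s`- and
`A s`-components of `μ s (x s, c)`.  Then the correlation factorizes over `s`:
`p(a|x) = [a s = a_s] ⬝ p'(a∖s | x∖s)`, where `p` is the correlation of `(D, F)` under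
`μ` and `p'` is the correlation of the reduced model at output `o_s` under the
interventions of the remaining agents. -/
theorem stmt6 (M : CDModel) (hstruct : M.StructComp) (hcons : M.Consistent)
    (hcard : 2 ≤ Fintype.card M.V)
    (s : M.V) (hs : M.IsSource s)
    (X A : M.V → Type) [∀ v, Fintype (X v)] [∀ v, Nonempty (X v)]
    [∀ v, Fintype (A v)] [∀ v, Nonempty (A v)]
    (μ : ∀ v, X v × M.I v → A v × M.O v)
    (x : ∀ v, X v) (o₀ : ∀ v, M.O v)
    (g : (∀ v, X v) → ∀ v, A v) (hg : M.IsWitness X A μ g)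
    (g' : (∀ v : {v : M.V // v ≠ s}, X v.1) → ∀ v : {v : M.V // v ≠ s}, A v.1)
    (hg' : (M.reduce s (μ s (x s, M.ω s o₀)).2).IsWitness
      (fun v => X v.1) (fun v => A v.1) (fun v => μ v.1) g') :
    ∀ a : ∀ v, A v,
      detCorr g x a =
        (if a s = (μ s (x s, M.ω s o₀)).1 then (1 : ℝ) else 0) *
          detCorr g' (fun v => x v.1) (fun v => a v.1) :=
  stmt6_general M hstruct s hs X A μ x o₀ g hg g' hg'
end
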